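/- arXiv:2411.14676 — 5 statements merged into one kernel-verified Lean document; each statement's English description precedes it below -/
import Mathlib

section
/- Over the ring R = F[x]/(x^H) with F a field, for any 0 ≤ h < H, the matrix x^h I_n ∈ R^{n×n} cannot be written as A B with A ∈ R^{n×r}, B ∈ R^{r×n} and r < n. That is, the rank-factorization rank of x^h I_n over R equals n. -/
open Polynomial

/-- Rank-factorization rank of a matrix over a commutative ring: the least `r`
such that `M = A * B` with `A` having `r` columns. -/
noncomputable def mrank {R : Type*} [CommRing R] {m c : Type*} [Fintype m] [Fintype c]
    (M : Matrix m c R) : ℕ :=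
  sInf {r : ℕ | ∃ A : Matrix m (Fin r) R, ∃ B : Matrix (Fin r) c R, M = A * B}

lemma lift_mat {R : Type*} [CommRing R] (I : Ideal R) {m c : Type*}
    (A : Matrix m c (R ⧸ I)) : ∃ A' : Matrix m c R, A'.map (Ideal.Quotient.mk I) = A := by
  choose f hf using fun i j => Ideal.Quotient.mk_surjective (I := I) (A i j)
  exact ⟨Matrix.of f, Matrix.ext fun i j => hf i j⟩

theorem key {F : Type*} [Field F] (H h n : ℕ) (hh : h < H) :
    ∀ r < n, ∀ A : Matrix (Fin n) (Fin r) (Polynomial F ⧸ Ideal.span {(X : Polynomial F) ^ H}),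
      ∀ B : Matrix (Fin r) (Fin n) (Polynomial F ⧸ Ideal.span {(X : Polynomial F) ^ H}),
        (Ideal.Quotient.mk (Ideal.span {(X : Polynomial F) ^ H}) (X ^ h)) •
          (1 : Matrix (Fin n) (Fin n) (Polynomial F ⧸ Ideal.span {(X : Polynomial F) ^ H}))
          ≠ A * B := by
  intro r hr A B hAB
  obtain ⟨Al, hAl⟩ := lift_mat _ A
  obtain ⟨Bl, hBl⟩ := lift_mat _ B
  set mk := Ideal.Quotient.mk (Ideal.span {(X : Polynomial F) ^ H}) with hmk
  -- difference entries divisible by X^H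
  have hdvd : ∀ i j, (X : Polynomial F) ^ H ∣
      ((X : Polynomial F) ^ h • (1 : Matrix (Fin n) (Fin n) (Polynomial F)) - Al * Bl) i j := by
    intro i j
    rw [← Ideal.mem_span_singleton, ← Ideal.Quotient.eq_zero_iff_mem]
    have h1 : ((X : Polynomial F) ^ h • (1 : Matrix (Fin n) (Fin n) (Polynomial F)) - Al * Bl).map mk = 0 := by
      rw [Matrix.map_sub _ (map_sub mk), Matrix.map_mul, hAl, hBl, ← hAB]
      have h2 : ((X : Polynomial F) ^ h • (1 : Matrix (Fin n) (Fin n) (Polynomial F))).map mk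
          = mk (X ^ h) • (1 : Matrix (Fin n) (Fin n) _) := by
        refine Matrix.ext fun i j => ?_
        simp [Matrix.one_apply, apply_ite mk]
      rw [h2, sub_self]
    have := congrFun (congrFun (congrArg (fun M : Matrix (Fin n) (Fin n) _ => (M : Fin n → Fin n → _)) h1) i) j
    simpa [Matrix.map_apply] using this
  choose C hC using fun i j => hdvd i j
  have hHh : h + (H - h) = H := Nat.add_sub_cancel' hh.le
  set N := (1 : Matrix (Fin n) (Fin n) (Polynomial F)) - (X : Polynomial F) ^ (H - h) • Matrix.of C with hN
  have hfact : (X : Polynomial F) ^ h • N = Al * Bl := by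
    refine Matrix.ext fun i j => ?_
    have hthis := hC i j
    have hx : (X : Polynomial F) ^ h * ((X : Polynomial F) ^ (H - h) * C i j)
        = X ^ H * C i j := by rw [← mul_assoc, ← pow_add, hHh]
    simp only [hN, Matrix.smul_apply, Matrix.sub_apply, Matrix.one_apply, smul_eq_mul,
      Matrix.of_apply] at hthis ⊢
    rw [mul_sub, hx]
    linear_combination hthis
  set K := RatFunc F
  set φ : Polynomial F →+* K := algebraMap (Polynomial F) K with hφ
  have hdetN : N.det ≠ 0 := by
    intro h0
    have h1 := congrArg (Polynomial.evalRingHom (0 : F)) h0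
    rw [RingHom.map_det] at h1
    have hN0 : N.map (Polynomial.evalRingHom (0 : F)) = 1 := by
      refine Matrix.ext fun i j => ?_
      have hHh1 : 0 < H - h := Nat.sub_pos_of_lt hh
      simp [hN, Matrix.map_apply, Matrix.sub_apply, Matrix.smul_apply, Matrix.one_apply,
        zero_pow hHh1.ne', apply_ite (Polynomial.eval (0 : F))]
    rw [RingHom.mapMatrix_apply, hN0] at h1
    simp at h1
  have hdetXN : ((X : Polynomial F) ^ h • N).det ≠ 0 := by
    rw [Matrix.det_smul]
    exact mul_ne_zero (pow_ne_zero _ (pow_ne_zero _ X_ne_zero)) hdetN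
  have hunit : IsUnit (((X : Polynomial F) ^ h • N).map φ) := by
    rw [Matrix.isUnit_iff_isUnit_det]
    have h2 : (((X : Polynomial F) ^ h • N).map φ).det = φ (((X : Polynomial F) ^ h • N).det) := by
      rw [RingHom.map_det, RingHom.mapMatrix_apply]
    rw [h2, isUnit_iff_ne_zero]
    simpa [map_eq_zero_iff φ (IsFractionRing.injective (Polynomial F) K)] using hdetXN
  have hrankn : (((X : Polynomial F) ^ h • N).map φ).rank = n := by
    rw [Matrix.rank_of_isUnit _ hunit, Fintype.card_fin]
  have hle : (((X : Polynomial F) ^ h • N).map φ).rank ≤ r := by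
    rw [hfact, Matrix.map_mul]
    exact le_trans (Matrix.rank_mul_le_left _ _)
      (le_trans (Matrix.rank_le_card_width _) (by simp))
  omega

theorem stmt6 {F : Type*} [Field F] (H h n : ℕ) (hh : h < H) :
    (∀ r < n, ∀ A : Matrix (Fin n) (Fin r) (Polynomial F ⧸ Ideal.span {(X : Polynomial F) ^ H}),
      ∀ B : Matrix (Fin r) (Fin n) (Polynomial F ⧸ Ideal.span {(X : Polynomial F) ^ H}),
        (Ideal.Quotient.mk (Ideal.span {(X : Polynomial F) ^ H}) (X ^ h)) •
          (1 : Matrix (Fin n) (Fin n) (Polynomial F ⧸ Ideal.span {(X : Polynomial F) ^ H}))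
          ≠ A * B) ∧
    mrank ((Ideal.Quotient.mk (Ideal.span {(X : Polynomial F) ^ H}) (X ^ h)) •
      (1 : Matrix (Fin n) (Fin n) (Polynomial F ⧸ Ideal.span {(X : Polynomial F) ^ H}))) = n := by
  refine ⟨key H h n hh, ?_⟩
  set M := (Ideal.Quotient.mk (Ideal.span {(X : Polynomial F) ^ H}) (X ^ h)) •
      (1 : Matrix (Fin n) (Fin n) (Polynomial F ⧸ Ideal.span {(X : Polynomial F) ^ H})) with hM
  have hn : n ∈ {r : ℕ | ∃ A : Matrix (Fin n) (Fin r) _, ∃ B : Matrix (Fin r) (Fin n) _, M = A * B} :=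
    ⟨M, 1, (mul_one M).symm⟩
  refine le_antisymm (Nat.sInf_le hn) (le_csInf ⟨n, hn⟩ ?_)
  rintro r ⟨A, B, hAB⟩
  by_contra hlt
  exact key H h n hh r (not_le.mp hlt) A B hAB
end

section
/- Over the ring R = F[x]/(x^H), let N be the block-diagonal matrix with blocks I_{b_0}, x I_{b_1}, ..., x^{H-1} I_{b_{H-1}}. Then the rank-factorization rank of N over R equals b_0 + b_1 + ... + b_{H-1}. -/
open Polynomial

set_option maxHeartbeats 1000000 in
set_option synthInstance.maxHeartbeats 100000 in
theorem stmt7 {F : Type*} [Field F] (H : ℕ) (b : Fin H → ℕ) :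
    mrank (Matrix.blockDiagonal'
      (fun h : Fin H =>
        ((Ideal.Quotient.mk (Ideal.span {(X : Polynomial F) ^ H}) (X ^ (h : ℕ))) •
          (1 : Matrix (Fin (b h)) (Fin (b h))
            (Polynomial F ⧸ Ideal.span {(X : Polynomial F) ^ H})))))
      = ∑ h : Fin H, b h := by
  classical
  set π := Ideal.Quotient.mk (Ideal.span {(X : Polynomial F) ^ H}) with hπ
  set n := ∑ h : Fin H, b h with hn
  set M : Matrix ((h : Fin H) × Fin (b h)) ((h : Fin H) × Fin (b h)) (Polynomial F ⧸ Ideal.span {(X : Polynomial F) ^ H}) :=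
    Matrix.blockDiagonal'
      (fun h : Fin H => (π (X ^ (h : ℕ))) •
        (1 : Matrix (Fin (b h)) (Fin (b h)) (Polynomial F ⧸ Ideal.span {(X : Polynomial F) ^ H}))) with hM
  have hcard : Fintype.card ((h : Fin H) × Fin (b h)) = n := by
    simp [Fintype.card_sigma, hn]
  obtain e := Fintype.equivFinOfCardEq hcard
  -- membership: n is achievable
  have hmem : n ∈ {r : ℕ | ∃ A : Matrix ((h : Fin H) × Fin (b h)) (Fin r) (Polynomial F ⧸ Ideal.span {(X : Polynomial F) ^ H}),
      ∃ B : Matrix (Fin r) ((h : Fin H) × Fin (b h)) (Polynomial F ⧸ Ideal.span {(X : Polynomial F) ^ H}), M = A * B} := by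
    refine ⟨M.submatrix id e.symm, (1 : Matrix _ _ (Polynomial F ⧸ Ideal.span {(X : Polynomial F) ^ H})).submatrix e.symm id, ?_⟩
    rw [Matrix.submatrix_mul_equiv, Matrix.mul_one, Matrix.submatrix_id_id]
  unfold mrank
  refine le_antisymm (Nat.sInf_le hmem) (le_csInf ⟨n, hmem⟩ ?_)
  rintro r ⟨A, B, hAB⟩
  -- lower bound
  by_cases hH : H = 0
  · subst hH; simp [hn]
  have hH1 : 1 ≤ H := Nat.one_le_iff_ne_zero.mpr hH
  -- companion matrix D with M * D = x^(H-1) • 1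
  set D : Matrix ((h : Fin H) × Fin (b h)) ((h : Fin H) × Fin (b h)) (Polynomial F ⧸ Ideal.span {(X : Polynomial F) ^ H}) :=
    Matrix.blockDiagonal'
      (fun h : Fin H => (π (X ^ (H - 1 - (h : ℕ)))) •
        (1 : Matrix (Fin (b h)) (Fin (b h)) (Polynomial F ⧸ Ideal.span {(X : Polynomial F) ^ H}))) with hD
  set T : Matrix ((h : Fin H) × Fin (b h)) ((h : Fin H) × Fin (b h)) (Polynomial F) :=
    (X : Polynomial F) ^ (H - 1) • 1 with hT
  have hsmulone : (π ((X : Polynomial F) ^ (H - 1))) •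
      (1 : Matrix ((h : Fin H) × Fin (b h)) ((h : Fin H) × Fin (b h)) (Polynomial F ⧸ Ideal.span {(X : Polynomial F) ^ H})) = T.map π := by
    ext i j
    simp [hT, Matrix.map_apply, Matrix.one_apply, apply_ite π, smul_eq_mul, mul_ite,
      mul_one, mul_zero]
  have hMD : M * D = T.map π := by
    rw [hM, hD, ← Matrix.blockDiagonal'_mul]
    have hblk : ∀ h : Fin H,
        ((π (X ^ (h : ℕ))) • (1 : Matrix (Fin (b h)) (Fin (b h)) (Polynomial F ⧸ Ideal.span {(X : Polynomial F) ^ H}))) *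
          ((π (X ^ (H - 1 - (h : ℕ)))) • 1) =
        (π ((X : Polynomial F) ^ (H - 1))) • (1 : Matrix (Fin (b h)) (Fin (b h)) (Polynomial F ⧸ Ideal.span {(X : Polynomial F) ^ H})) := by
      intro h
      rw [Matrix.smul_one_eq_diagonal, Matrix.smul_one_eq_diagonal, Matrix.smul_one_eq_diagonal, Matrix.diagonal_mul_diagonal, ← map_mul, ← pow_add]
      have := h.isLt
      rw [show (h : ℕ) + (H - 1 - (h : ℕ)) = H - 1 by omega]
    simp_rw [hblk]
    rw [show (fun h : Fin H => (π ((X : Polynomial F) ^ (H - 1))) •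
          (1 : Matrix (Fin (b h)) (Fin (b h)) (Polynomial F ⧸ Ideal.span {(X : Polynomial F) ^ H}))) =
        (π ((X : Polynomial F) ^ (H - 1))) •
          (fun h : Fin H => (1 : Matrix (Fin (b h)) (Fin (b h)) (Polynomial F ⧸ Ideal.span {(X : Polynomial F) ^ H}))) from rfl,
      Matrix.blockDiagonal'_smul,
      show Matrix.blockDiagonal'
          (fun h : Fin H => (1 : Matrix (Fin (b h)) (Fin (b h))
            (Polynomial F ⧸ Ideal.span {(X : Polynomial F) ^ H}))) = 1 from
        Matrix.blockDiagonal'_one,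
      hsmulone]
  -- lift A and B * D to Polynomial F
  have hsurA : ∀ i j, ∃ p : Polynomial F, π p = A i j := fun i j =>
    Ideal.Quotient.mk_surjective _
  have hsurB : ∀ i j, ∃ p : Polynomial F, π p = (B * D) i j := fun i j =>
    Ideal.Quotient.mk_surjective _
  set A' : Matrix ((h : Fin H) × Fin (b h)) (Fin r) (Polynomial F) :=
    fun i j => (hsurA i j).choose with hA'def
  set B' : Matrix (Fin r) ((h : Fin H) × Fin (b h)) (Polynomial F) :=
    fun i j => (hsurB i j).choose with hB'def
  have hA' : A'.map π = A := by
    ext i j; exact (hsurA i j).choose_spec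
  have hB' : B'.map π = B * D := by
    ext i j; exact (hsurB i j).choose_spec
  have hmain : (A' * B').map π = T.map π := by
    rw [Matrix.map_mul, hA', hB', ← Matrix.mul_assoc, ← hAB, hMD]
  have hdvd : ∀ i j, (X : Polynomial F) ^ H ∣ (A' * B') i j - T i j := by
    intro i j
    have h0 : π ((A' * B') i j - T i j) = 0 := by
      have := congrFun (congrFun hmain i) j
      simp only [Matrix.map_apply] at this
      rw [map_sub, this, sub_self]
    rwa [hπ, Ideal.Quotient.eq_zero_iff_mem, Ideal.mem_span_singleton] at h0
  set C : Matrix ((h : Fin H) × Fin (b h)) ((h : Fin H) × Fin (b h)) (Polynomial F) :=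
    fun i j => (hdvd i j).choose with hCdef
  have key : A' * B' = (X : Polynomial F) ^ (H - 1) • ((1 : Matrix ((h : Fin H) × Fin (b h)) ((h : Fin H) × Fin (b h)) (Polynomial F)) + (X : Polynomial F) • C) := by
    apply Matrix.ext
    intro i j
    have hc : (A' * B') i j - T i j = (X : Polynomial F) ^ H * C i j := (hdvd i j).choose_spec
    have hpow : (X : Polynomial F) ^ H = X ^ (H - 1) * X := by
      rw [← pow_succ]; congr 1; omega
    simp only [hT, Matrix.smul_apply, Matrix.add_apply, smul_eq_mul] at hc ⊢
    linear_combination hc + C i j * hpow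
  -- determinant is nonzero over F[X]
  have hdet1 : ((1 : Matrix ((h : Fin H) × Fin (b h)) ((h : Fin H) × Fin (b h)) (Polynomial F)) + (X : Polynomial F) • C).det ≠ 0 := by
    intro h0
    have hmap : (((1 : Matrix ((h : Fin H) × Fin (b h)) ((h : Fin H) × Fin (b h)) (Polynomial F)) + (X : Polynomial F) • C).map (Polynomial.evalRingHom (0 : F)))
        = (1 : Matrix ((h : Fin H) × Fin (b h)) ((h : Fin H) × Fin (b h)) F) := by
      apply Matrix.ext
      intro i j
      simp [Matrix.map_apply, Matrix.add_apply, Matrix.one_apply, apply_ite, smul_eq_mul]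
    have h1 : (Polynomial.evalRingHom (0 : F))
        (((1 : Matrix ((h : Fin H) × Fin (b h)) ((h : Fin H) × Fin (b h)) (Polynomial F)) + (X : Polynomial F) • C).det) = 1 := by
      rw [RingHom.map_det, RingHom.mapMatrix_apply, hmap, Matrix.det_one]
    rw [h0, RingHom.map_zero] at h1
    exact zero_ne_one h1
  have hdet : (A' * B').det ≠ 0 := by
    rw [key, Matrix.det_smul]
    exact mul_ne_zero (pow_ne_zero _ (pow_ne_zero _ Polynomial.X_ne_zero)) hdet1
  -- pass to the fraction field
  set K := FractionRing (Polynomial F) with hK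
  set f : Polynomial F →+* K := algebraMap (Polynomial F) K with hf
  have hfinj : Function.Injective f := IsFractionRing.injective (Polynomial F) K
  have hdetK : ((A' * B').map f).det ≠ 0 := by
    rw [← RingHom.mapMatrix_apply, ← RingHom.map_det]
    exact (map_ne_zero_iff f hfinj).mpr hdet
  have hunit : IsUnit ((A' * B').map f) :=
    (Matrix.isUnit_iff_isUnit_det _).mpr (isUnit_iff_ne_zero.mpr hdetK)
  have hrank : ((A' * B').map f).rank = Fintype.card ((h : Fin H) × Fin (b h)) :=
    Matrix.rank_of_isUnit _ hunit
  calc n = Fintype.card ((h : Fin H) × Fin (b h)) := hcard.symm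
    _ = ((A' * B').map f).rank := hrank.symm
    _ = ((A'.map f) * (B'.map f)).rank := by rw [Matrix.map_mul]
    _ ≤ (A'.map f).rank := Matrix.rank_mul_le_left _ _
    _ ≤ Fintype.card (Fin r) := Matrix.rank_le_card_width _
    _ = r := Fintype.card_fin r
end

section
/- The 2×2×2 tensor T over a field F (with characteristic ≠ 2 if needed) given by slices T_{:,:,0} = [[0,1],[1,0]] and T_{:,:,1} = [[1,0],[0,0]] has tensor rank at least 3 over F. -/
open scoped BigOperators

private lemma aux2 {F : Type*} [Field F]
    (a0 a1 b0 b1 c0 c1 p0 p1 q0 q1 r0 r1 : F)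
    (e1 : a0*b0*c0 + p0*q0*r0 = 0)
    (e2 : a0*b1*c0 + p0*q1*r0 = 1)
    (e3 : a1*b0*c0 + p1*q0*r0 = 1)
    (e4 : a1*b1*c0 + p1*q1*r0 = 0)
    (e5 : a0*b0*c1 + p0*q0*r1 = 1)
    (e6 : a0*b1*c1 + p0*q1*r1 = 0)
    (e7 : a1*b0*c1 + p1*q0*r1 = 0)
    (e8 : a1*b1*c1 + p1*q1*r1 = 0) : False := by
  have h1 : c0*r0*((a0*p1-a1*p0)*(b0*q1-b1*q0)) = -1 := by
    linear_combination (a1*b1*c0+p1*q1*r0)*e1 - (a1*b0*c0+p1*q0*r0)*e2 - e3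
  have h2 : (c1*r1)*((a0*p1-a1*p0)*(b0*q1-b1*q0)) = 0 := by
    linear_combination (a1*b1*c1+p1*q1*r1)*e5 + e8 - (a1*b0*c1+p1*q0*r1)*e6
  have h3 : (c0*r1+c1*r0)*((a0*p1-a1*p0)*(b0*q1-b1*q0)) = 0 := by
    linear_combination (a1*b1*c1+p1*q1*r1)*e1 + (a1*b1*c0+p1*q1*r0)*e5 + e4
      - (a0*b1*c0+p0*q1*r0)*e7 - (a0*b1*c1+p0*q1*r1)*e3 - e6
  have hne : c0*r0*((a0*p1-a1*p0)*(b0*q1-b1*q0)) ≠ 0 := by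
    rw [h1]; exact neg_ne_zero.mpr one_ne_zero
  have hc0 : c0 ≠ 0 := fun h => hne (by rw [h]; ring)
  have hr0 : r0 ≠ 0 := fun h => hne (by rw [h]; ring)
  have hDE : ((a0*p1-a1*p0)*(b0*q1-b1*q0)) ≠ 0 := fun h => hne (by rw [h]; ring)
  rcases mul_eq_zero.mp h2 with h | h
  · rcases mul_eq_zero.mp h with hc | hr
    · subst hc
      have h4 : r1 * (c0 * ((a0*p1-a1*p0)*(b0*q1-b1*q0))) = 0 := by linear_combination h3
      rcases mul_eq_zero.mp h4 with h5 | h5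
      · subst h5; simp at e5
      · exact absurd h5 (mul_ne_zero hc0 hDE)
    · subst hr
      have h4 : c1 * (r0 * ((a0*p1-a1*p0)*(b0*q1-b1*q0))) = 0 := by linear_combination h3
      rcases mul_eq_zero.mp h4 with h5 | h5
      · subst h5; simp at e5
      · exact absurd h5 (mul_ne_zero hr0 hDE)
  · exact absurd h hDE

theorem stmt11 {F : Type*} [Field F]
    (T : Fin 2 → Fin 2 → Fin 2 → F)
    (hT : ∀ i j : Fin 2, T i j 0 = !![(0 : F), 1; 1, 0] i j ∧
                         T i j 1 = !![(1 : F), 0; 0, 0] i j)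
    (R : ℕ) (hR : R < 3) :
    ¬ ∃ u v w : Fin R → Fin 2 → F,
        ∀ i j k : Fin 2, T i j k = ∑ r : Fin R, u r i * v r j * w r k := by
  rintro ⟨u, v, w, h⟩
  have E : ∀ i j k : Fin 2,
      (!![(0 : F), 1; 1, 0] i j) * (if k = 0 then 1 else 0)
        + (!![(1 : F), 0; 0, 0] i j) * (if k = 1 then 1 else 0)
      = ∑ r : Fin R, u r i * v r j * w r k := by
    intro i j k
    fin_cases k
    · simpa [(hT i j).1] using h i j 0
    · simpa [(hT i j).2] using h i j 1
  interval_cases R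
  · have e := E 0 0 1
    simp at e
  · have e1 := E 0 0 0; have e2 := E 0 1 0; have e3 := E 1 0 0; have e4 := E 1 1 0
    have e5 := E 0 0 1
    simp only [Fin.sum_univ_one, Matrix.cons_val', Matrix.cons_val_zero, Matrix.cons_val_one,
      Matrix.head_cons, Matrix.head_fin_const, Matrix.empty_val', Matrix.cons_val_fin_one,
      Matrix.of_apply, if_true, reduceIte, Fin.reduceEq, one_mul, zero_mul, mul_one, mul_zero, add_zero,
      zero_add] at e1 e2 e3 e4 e5
    clear e4 e5
    exact one_ne_zero (by linear_combination e3 + (u 0 1 * v 0 0 * w 0 0) * e2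
      - (u 0 1 * v 0 1 * w 0 0) * e1 : (1 : F) = 0)
  · have e1 := E 0 0 0; have e2 := E 0 1 0; have e3 := E 1 0 0; have e4 := E 1 1 0
    have e5 := E 0 0 1; have e6 := E 0 1 1; have e7 := E 1 0 1; have e8 := E 1 1 1
    simp only [Fin.sum_univ_two, Matrix.cons_val', Matrix.cons_val_zero, Matrix.cons_val_one,
      Matrix.head_cons, Matrix.head_fin_const, Matrix.empty_val', Matrix.cons_val_fin_one,
      Matrix.of_apply, if_true, reduceIte, Fin.reduceEq, one_mul, zero_mul, mul_one, mul_zero, add_zero,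
      zero_add] at e1 e2 e3 e4 e5 e6 e7 e8
    exact aux2 (u 0 0) (u 0 1) (v 0 0) (v 0 1) (w 0 0) (w 0 1)
      (u 1 0) (u 1 1) (v 1 0) (v 1 1) (w 1 0) (w 1 1)
      e1.symm e2.symm e3.symm e4.symm e5.symm e6.symm e7.symm e8.symm
end

section
/- Let F be a field, T̃ ∈ F^{n_0 × ... × n_{D-1}}, and Q ∈ GL(n_0, F). Then Q ×_0 T̃ equals ⟦I_{n_0}, B_1, ..., B_{D-1}⟧ for some matrices B_d ∈ F^{n_d × n_0} if and only if every row v = Q_{i,:} of Q satisfies rank(v ×_0 T̃) ≤ 1 (as a (D−1)-dimensional tensor). -/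
open scoped BigOperators
open Matrix

/-- Evaluation of a CPD (list of factor matrices) into a tensor. -/
def cpdEval {F : Type*} [CommRing F] {D R : ℕ} {n : Fin D → ℕ}
    (A : (d : Fin D) → Matrix (Fin (n d)) (Fin R) F) :
    ((d : Fin D) → Fin (n d)) → F :=
  fun i => ∑ r : Fin R, ∏ d : Fin D, A d (i d) r

/-- `T` admits a CPD of rank (at most) `R`. -/
def HasRankLE {F : Type*} [CommRing F] {D : ℕ} {n : Fin D → ℕ}
    (T : ((d : Fin D) → Fin (n d)) → F) (R : ℕ) : Prop :=
  ∃ A : (d : Fin D) → Matrix (Fin (n d)) (Fin R) F, T = cpdEval A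

/-- Evaluation of a CPD of a `(1+D)`-dimensional tensor, with the first axis
(axis `0`, of length `n0`) written separately (in curried form). -/
def cpdEval1 {F : Type*} [CommRing F] {D R n0 : ℕ} {n : Fin D → ℕ}
    (A0 : Matrix (Fin n0) (Fin R) F)
    (A : (d : Fin D) → Matrix (Fin (n d)) (Fin R) F) :
    Fin n0 → ((d : Fin D) → Fin (n d)) → F :=
  fun i0 i => ∑ r : Fin R, A0 i0 r * ∏ d : Fin D, A d (i d) r

/-- Contraction `v ×₀ T` of a row vector with the first axis of a
`(1+D)`-dimensional tensor (in curried form), giving a `D`-dimensional tensor. -/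
def rowAct {F : Type*} [CommRing F] {D n0 : ℕ} {n : Fin D → ℕ}
    (v : Fin n0 → F) (T : Fin n0 → ((d : Fin D) → Fin (n d)) → F) :
    ((d : Fin D) → Fin (n d)) → F :=
  fun i => ∑ k : Fin n0, v k * T k i

theorem stmt15 {F : Type*} [Field F] {D n0 : ℕ} {n : Fin D → ℕ}
    (T : Fin n0 → ((d : Fin D) → Fin (n d)) → F)
    (Q : GL (Fin n0) F) :
    (∃ B : (d : Fin D) → Matrix (Fin (n d)) (Fin n0) F,
        (fun i0 => rowAct ((Q : Matrix (Fin n0) (Fin n0) F) i0) T)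
          = cpdEval1 (1 : Matrix (Fin n0) (Fin n0) F) B)
    ↔ ∀ i0 : Fin n0, HasRankLE (rowAct ((Q : Matrix (Fin n0) (Fin n0) F) i0) T) 1 := by
  constructor
  · rintro ⟨B, hB⟩ i0
    refine ⟨fun d => fun j _ => B d j i0, ?_⟩
    rw [congrFun hB i0]
    funext i
    simp [cpdEval1, cpdEval, Matrix.one_apply, Finset.sum_ite_eq]
  · intro h
    choose A hA using h
    refine ⟨fun d => fun j i0 => A i0 d j 0, ?_⟩
    funext i0 i
    rw [hA i0]
    simp [cpdEval1, cpdEval, Matrix.one_apply, Finset.sum_ite_eq]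
end

section
/- Let F be a field and T ∈ F^{n_0 × ... × n_{D-1}} a tensor whose mode-d unfoldings all have full rank n_d (T is axis-reduced), with n_d ≤ R for all d. Then T has a rank-≤R CPD if and only if there exist matrices V_d ∈ F^{n_d × (R − n_0)} and an invertible Q ∈ GL(n_0, F) such that every row Q_{i,:} satisfies rank(Q_{i,:} ×_0 (T − ⟦V_0,...,V_{D-1}⟧)) ≤ 1. -/
open scoped BigOperators
open Matrix

-- sum splitting over an equiv from a sum type
lemma sum_split {F : Type*} [AddCommMonoid F] {a b c : ℕ}
    (ε : Fin a ⊕ Fin b ≃ Fin c) (g : Fin c → F) :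
    ∑ r : Fin c, g r = (∑ i : Fin a, g (ε (Sum.inl i))) + ∑ s : Fin b, g (ε (Sum.inr s)) := by
  rw [← ε.sum_comp g, Fintype.sum_sum_type]

lemma backward_dir {F : Type*} [Field F] {D n0 R : ℕ} {n : Fin D → ℕ}
    (T : Fin n0 → ((d : Fin D) → Fin (n d)) → F) (hn0 : n0 ≤ R)
    (V0 : Matrix (Fin n0) (Fin (R - n0)) F)
    (V : (d : Fin D) → Matrix (Fin (n d)) (Fin (R - n0)) F)
    (Q : GL (Fin n0) F)
    (hQ : ∀ i0 : Fin n0,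
      HasRankLE (rowAct ((Q : Matrix (Fin n0) (Fin n0) F) i0)
        (fun k i => T k i - cpdEval1 V0 V k i)) 1) :
    ∃ A0 : Matrix (Fin n0) (Fin R) F, ∃ A : (d : Fin D) → Matrix (Fin (n d)) (Fin R) F,
      T = cpdEval1 A0 A := by
  classical
  choose B hB using hQ
  have hadd : n0 + (R - n0) = R := Nat.add_sub_cancel' hn0
  let ε : Fin n0 ⊕ Fin (R - n0) ≃ Fin R := finSumFinEquiv.trans (finCongr hadd)
  set Qi : Matrix (Fin n0) (Fin n0) F := ((Q⁻¹ : GL (Fin n0) F) : Matrix (Fin n0) (Fin n0) F)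
    with hQi
  refine ⟨fun k r => Sum.elim (fun i0 => Qi k i0) (fun s => V0 k s) (ε.symm r),
    fun d => Matrix.of (fun j r => Sum.elim (fun i0 => B i0 d j 0) (fun s => V d j s) (ε.symm r)),
    ?_⟩
  funext k i
  show T k i = ∑ r : Fin R, _
  rw [sum_split ε]
  simp only [Equiv.symm_apply_apply, Sum.elim_inl, Sum.elim_inr, Matrix.of_apply]
  have key : ∀ i0 : Fin n0,
      (∏ d : Fin D, B i0 d (i d) 0)
        = ∑ k' : Fin n0, (Q : Matrix (Fin n0) (Fin n0) F) i0 k' * (T k' i - cpdEval1 V0 V k' i) := by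
    intro i0
    have := congrFun (hB i0) i
    simpa [rowAct, cpdEval] using this.symm
  have hsum1 : ∑ i0 : Fin n0, Qi k i0 * ∏ d : Fin D, B i0 d (i d) 0
      = T k i - cpdEval1 V0 V k i := by
    simp_rw [key, Finset.mul_sum, ← mul_assoc]
    rw [Finset.sum_comm]
    have hQQ : Qi * (Q : Matrix (Fin n0) (Fin n0) F) = 1 := by
      rw [hQi]
      exact_mod_cast Q.inv_mul
    have : ∀ k' : Fin n0, (∑ i0 : Fin n0, Qi k i0 * (Q : Matrix (Fin n0) (Fin n0) F) i0 k')
        = (1 : Matrix (Fin n0) (Fin n0) F) k k' := by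
      intro k'
      rw [← hQQ]; rfl
    simp_rw [← Finset.sum_mul, this]
    simp [Matrix.one_apply]
  rw [hsum1]
  show T k i = T k i - cpdEval1 V0 V k i + ∑ s, V0 k s * ∏ d, V d (i d) s
  have : (∑ s, V0 k s * ∏ d, V d (i d) s) = cpdEval1 V0 V k i := rfl
  rw [this]; ring

lemma forward_dir {F : Type*} [Field F] {D n0 R : ℕ} {n : Fin D → ℕ}
    (T : Fin n0 → ((d : Fin D) → Fin (n d)) → F)
    (h0 : (Matrix.of (fun (i0 : Fin n0) (j : (d : Fin D) → Fin (n d)) => T i0 j)).rank = n0)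
    (hn0 : n0 ≤ R)
    (A0 : Matrix (Fin n0) (Fin R) F) (A : (d : Fin D) → Matrix (Fin (n d)) (Fin R) F)
    (hT : T = cpdEval1 A0 A) :
    ∃ V0 : Matrix (Fin n0) (Fin (R - n0)) F,
    ∃ V : (d : Fin D) → Matrix (Fin (n d)) (Fin (R - n0)) F,
    ∃ Q : GL (Fin n0) F,
      ∀ i0 : Fin n0,
        HasRankLE (rowAct ((Q : Matrix (Fin n0) (Fin n0) F) i0)
          (fun k i => T k i - cpdEval1 V0 V k i)) 1 := by
  classical
  -- the unfolding factors as A0 * W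
  have hfac : (Matrix.of (fun (i0 : Fin n0) (j : (d : Fin D) → Fin (n d)) => T i0 j))
      = A0 * Matrix.of (fun (r : Fin R) (j : (d : Fin D) → Fin (n d)) => ∏ d, A d (j d) r) := by
    ext i0 j
    simp [Matrix.mul_apply, hT, cpdEval1]
  have hrank_ge : n0 ≤ A0.rank := by
    have h := Matrix.rank_mul_le_left A0
      (Matrix.of (fun (r : Fin R) (j : (d : Fin D) → Fin (n d)) => ∏ d, A d (j d) r))
    rw [← hfac, h0] at h
    exact h
  -- columns of A0 span F^{n0}
  have hspan : Submodule.span F (Set.range A0ᵀ) = ⊤ := by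
    rw [show Set.range A0ᵀ = Set.range A0.col from rfl, ← Matrix.range_mulVecLin]
    apply Submodule.eq_top_of_finrank_eq
    refine le_antisymm (Submodule.finrank_le _) ?_
    rw [Module.finrank_pi, Fintype.card_fin]
    exact hrank_ge
  obtain ⟨b, hbsub, hbspan, hbli⟩ := exists_linearIndependent F (Set.range A0ᵀ)
  rw [hspan] at hbspan
  have hbfin : b.Finite := hbli.setFinite
  haveI : Fintype b := hbfin.fintype
  have hbasis : Nonempty (Module.Basis b F (Fin n0 → F)) :=
    ⟨Module.Basis.mk hbli (by rw [Subtype.range_coe, hbspan])⟩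
  have hcard : Fintype.card b = n0 := by
    obtain ⟨bb⟩ := hbasis
    have := Module.finrank_eq_card_basis bb
    simp only [Module.finrank_pi, Fintype.card_fin] at this
    omega
  let g : Fin n0 ≃ b := (Fintype.equivFinOfCardEq hcard).symm
  have hmem : ∀ i : Fin n0, ((g i : Fin n0 → F)) ∈ Set.range A0ᵀ := fun i => hbsub (g i).2
  let e : Fin n0 → Fin R := fun i => (hmem i).choose
  have he : ∀ i, A0ᵀ (e i) = (g i : Fin n0 → F) := fun i => (hmem i).choose_spec
  have he_inj : Function.Injective e := by
    intro i j hij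
    have : (g i : Fin n0 → F) = (g j : Fin n0 → F) := by rw [← he i, ← he j, hij]
    exact g.injective (Subtype.coe_injective this)
  -- the selected square submatrix is invertible
  set B : Matrix (Fin n0) (Fin n0) F := Matrix.of (fun k i => A0 k (e i)) with hBdef
  have hBu : IsUnit B := by
    rw [← Matrix.linearIndependent_cols_iff_isUnit]
    have : (fun i => Bᵀ i) = fun i => ((g i : Fin n0 → F)) := by
      funext i; rw [← he i]; rfl
    rw [show B.col = fun i => ((g i : Fin n0 → F)) from this]
    exact hbli.comp (fun i => g i) (fun i j hij => g.injective hij)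
  -- enumerate the complementary columns
  have hcs : ((Finset.image e Finset.univ)ᶜ : Finset (Fin R)).card = R - n0 := by
    rw [Finset.card_compl, Finset.card_image_of_injective _ he_inj]
    simp
  let g2 : Fin (R - n0) → Fin R := ((Finset.image e Finset.univ)ᶜ).orderEmbOfFin hcs
  have hg2mem : ∀ s, g2 s ∈ (Finset.image e Finset.univ)ᶜ := fun s =>
    Finset.orderEmbOfFin_mem _ hcs s
  -- assemble the splitting equivalence
  have hbij : Function.Bijective (Sum.elim e g2) := by
    rw [Fintype.bijective_iff_injective_and_card]
    constructor
    · intro x y hxy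
      cases x <;> cases y <;> simp only [Sum.elim_inl, Sum.elim_inr] at hxy
      · exact congrArg _ (he_inj hxy)
      · exact absurd (hxy ▸ Finset.mem_image_of_mem e (Finset.mem_univ _))
          (Finset.mem_compl.mp (hg2mem _))
      · exact absurd (hxy.symm ▸ Finset.mem_image_of_mem e (Finset.mem_univ _))
          (Finset.mem_compl.mp (hg2mem _))
      · exact congrArg _ ((((Finset.image e Finset.univ)ᶜ).orderEmbOfFin hcs).injective hxy)
    · simp [Fintype.card_sum]; omega
  let ε : Fin n0 ⊕ Fin (R - n0) ≃ Fin R := Equiv.ofBijective _ hbij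
  refine ⟨Matrix.of (fun k s => A0 k (g2 s)), fun d => Matrix.of (fun j s => A d j (g2 s)),
    hBu.unit⁻¹, ?_⟩
  intro i0
  refine ⟨fun d => Matrix.of (fun j (_ : Fin 1) => A d j (e i0)), ?_⟩
  funext i
  have hdiff : ∀ k, T k i - cpdEval1 (Matrix.of (fun k s => A0 k (g2 s)))
      (fun d => Matrix.of (fun j s => A d j (g2 s))) k i
      = ∑ i' : Fin n0, B k i' * ∏ d, A d (i d) (e i') := by
    intro k
    have hsplit := sum_split ε (fun r => A0 k r * ∏ d, A d (i d) r)
    have hTk : T k i = ∑ r : Fin R, A0 k r * ∏ d, A d (i d) r := by rw [hT]; rfl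
    have hεl : ∀ i' : Fin n0, ε (Sum.inl i') = e i' := fun _ => rfl
    have hεr : ∀ s, ε (Sum.inr s) = g2 s := fun _ => rfl
    simp only [hεl, hεr] at hsplit
    rw [hTk, hsplit]
    simp [cpdEval1, hBdef]
  show (∑ k, ((hBu.unit⁻¹ : GL (Fin n0) F) : Matrix (Fin n0) (Fin n0) F) i0 k * _) = _
  simp_rw [hdiff, Finset.mul_sum, ← mul_assoc]
  rw [Finset.sum_comm]
  have hQB : ((hBu.unit⁻¹ : GL (Fin n0) F) : Matrix (Fin n0) (Fin n0) F) * B = 1 := by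
    have := hBu.unit.inv_mul
    rwa [hBu.unit_spec] at this
  have hrow : ∀ i' : Fin n0,
      (∑ k, ((hBu.unit⁻¹ : GL (Fin n0) F) : Matrix (Fin n0) (Fin n0) F) i0 k * B k i')
        = (1 : Matrix (Fin n0) (Fin n0) F) i0 i' := by
    intro i'; rw [← hQB]; rfl
  simp_rw [← Finset.sum_mul, hrow]
  simp [cpdEval, Matrix.one_apply]

theorem stmt16 {F : Type*} [Field F] {D n0 R : ℕ} {n : Fin D → ℕ}
    (T : Fin n0 → ((d : Fin D) → Fin (n d)) → F)
    -- `T` is axis-reduced: its mode-`0` unfolding has full rank `n0` …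
    (h0 : (Matrix.of (fun (i0 : Fin n0) (j : (d : Fin D) → Fin (n d)) => T i0 j)).rank = n0)
    -- … and for every other axis `d`, the mode-`d` unfolding has full rank `n d`
    (hd : ∀ d : Fin D,
      (Matrix.of (fun (idx : Fin (n d)) (p : Fin n0 × ((d' : Fin D) → Fin (n d'))) =>
        T p.1 (Function.update p.2 d idx))).rank = n d)
    (hn0 : n0 ≤ R) (hn : ∀ d : Fin D, n d ≤ R) :
    (∃ A0 : Matrix (Fin n0) (Fin R) F, ∃ A : (d : Fin D) → Matrix (Fin (n d)) (Fin R) F,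
        T = cpdEval1 A0 A)
    ↔ (∃ V0 : Matrix (Fin n0) (Fin (R - n0)) F,
        ∃ V : (d : Fin D) → Matrix (Fin (n d)) (Fin (R - n0)) F,
        ∃ Q : GL (Fin n0) F,
          ∀ i0 : Fin n0,
            HasRankLE (rowAct ((Q : Matrix (Fin n0) (Fin n0) F) i0)
              (fun k i => T k i - cpdEval1 V0 V k i)) 1) := by
  constructor
  · rintro ⟨A0, A, hT⟩
    exact forward_dir T h0 hn0 A0 A hT
  · rintro ⟨V0, V, Q, hQ⟩
    exact backward_dir T hn0 V0 V Q hQ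
end
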